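/- Let f : [0,1]^d → ℝ be a non-negative, continuously differentiable, M₁-Lipschitz, continuous DR-submodular function, and let F be the surrogate potential. Then for every x, y ∈ [0,1]^d: (1 − e^{−1}) · ⟨∇F(x), y⟩ ≥ ∫₀¹ e^{z−1} [ f(h_z(x) ⊕ y) − f(h_z(x)) ] dz. -/

import Mathlib

/-!
DR-submodularity makes `f` concave along nonnegative directions inside the box, so
`f (u ⊕ y) - f u ≤ ⟪∇f u, (1 - u) ⊙ y⟫` for `u, y ∈ [0,1]^d`. Differentiating `F` under the
integral sign is legitimate because the factor `z` in `∂h_z/∂x = z e^{-z x}` cancels the `1/z`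
singularity of the weight, and gives
`(1 - e⁻¹) ⟪∇F x, y⟫ = ∫₀¹ e^{z-1} ⟪∇f (h_z x), e^{-z x} ⊙ y⟫ dz`.
Since `e^{-z x} ⊙ y = h_z x ⊕ y - h_z x`, the concavity bound applied at `u = h_z x` gives the claim.
-/

open scoped RealInnerProductSpace

noncomputable section

/-- Membership in the unit box `[0,1]^d`. -/
def inBox {d : ℕ} (x : EuclideanSpace ℝ (Fin d)) : Prop :=
  ∀ i, x i ∈ Set.Icc (0 : ℝ) 1

/-- Continuous DR-submodularity: the gradient is coordinate-wise antitone on `[0,1]^d`. -/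
def DRSubmodular {d : ℕ} (f : EuclideanSpace ℝ (Fin d) → ℝ) : Prop :=
  ∀ x y : EuclideanSpace ℝ (Fin d), inBox x → inBox y → (∀ i, x i ≤ y i) →
    ∀ i, gradient f y i ≤ gradient f x i

/-- The exponential reparametrization `h_z(x) = 1 - e^{-z x}` (coordinate-wise). -/
def hmap {d : ℕ} (z : ℝ) (x : EuclideanSpace ℝ (Fin d)) : EuclideanSpace ℝ (Fin d) :=
  WithLp.toLp 2 (fun i => 1 - Real.exp (-(z * x i)))

/-- Coordinate-wise probabilistic sum `x ⊕ y = 1 - (1-x) ⊙ (1-y)`. -/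
def psum {d : ℕ} (x y : EuclideanSpace ℝ (Fin d)) : EuclideanSpace ℝ (Fin d) :=
  WithLp.toLp 2 (fun i => 1 - (1 - x i) * (1 - y i))

/-- Coordinate-wise (Hadamard) product. -/
def had {d : ℕ} (u v : EuclideanSpace ℝ (Fin d)) : EuclideanSpace ℝ (Fin d) :=
  WithLp.toLp 2 (fun i => u i * v i)

/-- Coordinate-wise exponential `e^{-z x}`. -/
def expv {d : ℕ} (z : ℝ) (x : EuclideanSpace ℝ (Fin d)) : EuclideanSpace ℝ (Fin d) :=
  WithLp.toLp 2 (fun i => Real.exp (-(z * x i)))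

/-- The surrogate potential
`F(x) = ∫₀¹ (e^{z-1} / ((1-e⁻¹) z)) (f(1 - e^{-z x}) - f(0)) dz`. -/
def surrogate {d : ℕ} (f : EuclideanSpace ℝ (Fin d) → ℝ)
    (x : EuclideanSpace ℝ (Fin d)) : ℝ :=
  ∫ z in (0:ℝ)..1, (Real.exp (z - 1) / ((1 - Real.exp (-1)) * z)) * (f (hmap z x) - f 0)

/-- A set `K ⊆ [0,1]^d` is down-closed if `y ∈ K` and `0 ≤ x ≤ y` imply `x ∈ K`. -/
def DownClosed {d : ℕ} (K : Set (EuclideanSpace ℝ (Fin d))) : Prop :=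
  ∀ y ∈ K, ∀ x : EuclideanSpace ℝ (Fin d), (∀ i, 0 ≤ x i) → (∀ i, x i ≤ y i) → x ∈ K

open MeasureTheory Set

variable {d : ℕ}

section Box

variable {x y : EuclideanSpace ℝ (Fin d)} {z : ℝ}

lemma inBox_hmap (hx : inBox x) (hz : 0 ≤ z) : inBox (hmap z x) := by
  intro i
  have : Real.exp (-(z * x i)) ≤ 1 := Real.exp_le_one_iff.2 (by nlinarith [(hx i).1])
  simp only [hmap, mem_Icc]
  constructor <;> linarith [Real.exp_pos (-(z * x i))]

lemma inBox_psum (hx : inBox x) (hy : inBox y) : inBox (psum x y) := by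
  intro i
  obtain ⟨hx0, hx1⟩ := hx i
  obtain ⟨hy0, hy1⟩ := hy i
  simp only [psum, mem_Icc]
  constructor <;> nlinarith

lemma le_psum (hx : inBox x) (hy : inBox y) (i : Fin d) : x i ≤ psum x y i := by
  have := mul_nonneg (sub_nonneg.2 (hx i).2) (hy i).1
  simp only [psum]
  linarith

lemma psum_hmap_sub_hmap : psum (hmap z x) y - hmap z x = had (expv z x) y := by
  ext i
  simp [psum, hmap, had, expv]
  ring

lemma hmap_zero : hmap z (0 : EuclideanSpace ℝ (Fin d)) = 0 := by
  ext i
  simp [hmap]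

end Box

lemma inner_le_inner_of_le {ι : Type*} [Fintype ι] {a b c : EuclideanSpace ℝ ι}
    (hab : ∀ i, a i ≤ b i) (hc : ∀ i, 0 ≤ c i) :
    ⟪a, c⟫ ≤ ⟪b, c⟫ := by
  simp only [PiLp.inner_apply, RCLike.inner_apply, conj_trivial]
  gcongr with i
  exacts [hc i, hab i]

theorem DRSubmodular.sub_le_inner_gradient {f : EuclideanSpace ℝ (Fin d) → ℝ}
    (hDR : DRSubmodular f) (hf : Differentiable ℝ f) {u v : EuclideanSpace ℝ (Fin d)}
    (hu : inBox u) (hv : inBox v) (huv : ∀ i, u i ≤ v i) :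
    f v - f u ≤ ⟪gradient f u, v - u⟫ := by
  set w : ℝ → EuclideanSpace ℝ (Fin d) := fun t => u + t • (v - u)
  have hw : ∀ t, HasDerivAt w (v - u) t := fun t => by
    simpa only [id, one_smul] using ((hasDerivAt_id t).smul_const (v - u)).const_add u
  have hg : ∀ t, HasDerivAt (f ∘ w) ⟪gradient f (w t), v - u⟫ t := fun t => by
    simpa only [← toDual_gradient, InnerProductSpace.toDual_apply_apply] using
      (hf (w t)).hasFDerivAt.comp_hasDerivAt t (hw t)
  obtain ⟨t, ht, hslope⟩ := exists_hasDerivAt_eq_slope (f ∘ w) _ zero_lt_one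
    (continuous_iff_continuousAt.2 fun t => (hg t).continuousAt).continuousOn (fun t _ => hg t)
  have hwt : ∀ i, w t i = u i + t * (v i - u i) := fun i => rfl
  have hu_le : ∀ i, u i ≤ w t i := fun i => by
    rw [hwt]; nlinarith [ht.1, huv i]
  have hwt_box : inBox (w t) := fun i => by
    obtain ⟨hu0, hu1⟩ := hu i
    obtain ⟨hv0, hv1⟩ := hv i
    rw [hwt]; constructor <;> nlinarith [ht.1, ht.2]
  have hdiff : ∀ i, 0 ≤ (v - u) i := fun i => by simpa using huv i
  calc f v - f u = ⟪gradient f (w t), v - u⟫ := by simpa [w] using hslope.symm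
    _ ≤ ⟪gradient f u, v - u⟫ :=
      inner_le_inner_of_le (hDR u (w t) hu hwt_box hu_le) hdiff

def hmapDeriv (z : ℝ) (x : EuclideanSpace ℝ (Fin d)) :
    EuclideanSpace ℝ (Fin d) →L[ℝ] EuclideanSpace ℝ (Fin d) :=
  Matrix.toEuclideanCLM (n := Fin d) (𝕜 := ℝ)
    (Matrix.diagonal fun i => z * Real.exp (-(z * x i)))

lemma hmapDeriv_apply (z : ℝ) (x v : EuclideanSpace ℝ (Fin d)) :
    hmapDeriv z x v = z • had (expv z x) v := by
  ext i
  simp [hmapDeriv, Matrix.ofLp_toEuclideanCLM, Matrix.mulVec_diagonal, had, expv, mul_assoc]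

lemma hasFDerivAt_hmap (z : ℝ) (x : EuclideanSpace ℝ (Fin d)) :
    HasFDerivAt (hmap z) (hmapDeriv z x) x := by
  rw [← hasFDerivWithinAt_univ, hasFDerivWithinAt_piLp]
  intro i
  rw [hasFDerivWithinAt_univ]
  have hexp : HasDerivAt (fun t => 1 - Real.exp (-(z * t))) (Real.exp (-(z * x i)) * z) (x i) := by
    simpa using (((hasDerivAt_id (x i)).const_mul z).neg.exp).const_sub 1
  refine (hexp.comp_hasFDerivAt (f := fun v : EuclideanSpace ℝ (Fin d) => v i) x
    (PiLp.hasFDerivAt_apply (𝕜 := ℝ) 2 x i)).congr_fderiv ?_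
  ext v
  simp [hmapDeriv_apply, had, expv]
  ring

open scoped Matrix.Norms.L2Operator in
lemma norm_hmapDeriv_le {z : ℝ} (hz : 0 ≤ z) (x : EuclideanSpace ℝ (Fin d)) :
    ‖hmapDeriv z x‖ ≤ z * Real.exp (z * ‖x‖) := by
  rw [hmapDeriv, Matrix.l2_opNorm_toEuclideanCLM, Matrix.l2_opNorm_diagonal]
  refine (pi_norm_le_iff_of_nonneg (by positivity)).2 fun i => ?_
  rw [Real.norm_eq_abs, abs_of_nonneg (by positivity)]
  have : |x i| ≤ ‖x‖ := PiLp.norm_apply_le x i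
  gcongr
  nlinarith [neg_abs_le (x i)]

lemma continuous_hmap_uncurry :
    Continuous fun p : ℝ × EuclideanSpace ℝ (Fin d) => hmap p.1 p.2 :=
  (PiLp.continuous_toLp 2 _).comp (continuous_pi fun i => by fun_prop)

lemma continuous_hmap_left (x : EuclideanSpace ℝ (Fin d)) : Continuous fun z => hmap z x :=
  continuous_hmap_uncurry.comp (Continuous.prodMk_left x)

lemma continuous_hmapDeriv_left (x : EuclideanSpace ℝ (Fin d)) :
    Continuous fun z => hmapDeriv z x := by
  refine continuous_clm_apply.2 fun v => ?_
  simp only [hmapDeriv_apply]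
  exact continuous_id.smul ((PiLp.continuous_toLp 2 _).comp (continuous_pi fun i => by fun_prop))

lemma intervalIntegrable_of_continuousOn_Ioi_of_bound {F : Type*} [NormedAddCommGroup F]
    {g : ℝ → F} (hg : ContinuousOn g (Ioi 0)) {B : ℝ} (hB : ∀ z ∈ Ioc (0 : ℝ) 1, ‖g z‖ ≤ B) :
    IntervalIntegrable g volume 0 1 := by
  rw [intervalIntegrable_iff_integrableOn_Ioc_of_le zero_le_one]
  exact IntegrableOn.of_bound measure_Ioc_lt_top
    ((hg.mono Ioc_subset_Ioi_self).aestronglyMeasurable measurableSet_Ioc) B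
    ((ae_restrict_iff' measurableSet_Ioc).2 (.of_forall hB))

def surrogateWeight (z : ℝ) : ℝ := Real.exp (z - 1) / ((1 - Real.exp (-1)) * z)

lemma one_sub_exp_neg_one_pos : 0 < 1 - Real.exp (-1) := by
  have : Real.exp (-1) < 1 := Real.exp_lt_one_iff.2 (by norm_num)
  linarith

lemma surrogateWeight_nonneg {z : ℝ} (hz : 0 ≤ z) : 0 ≤ surrogateWeight z :=
  div_nonneg (Real.exp_nonneg _) (mul_nonneg one_sub_exp_neg_one_pos.le hz)

lemma surrogateWeight_mul_self {z : ℝ} (hz : z ≠ 0) :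
    surrogateWeight z * z = Real.exp (z - 1) / (1 - Real.exp (-1)) := by
  have := one_sub_exp_neg_one_pos.ne'
  rw [surrogateWeight]
  field_simp

lemma continuousOn_surrogateWeight : ContinuousOn surrogateWeight (Ioi 0) :=
  ContinuousOn.div (by fun_prop) (by fun_prop) fun z hz =>
    mul_ne_zero one_sub_exp_neg_one_pos.ne' (ne_of_gt hz)

section Surrogate

open scoped Interval

variable {f : EuclideanSpace ℝ (Fin d) → ℝ}

def surrogateIntegrandFDeriv (f : EuclideanSpace ℝ (Fin d) → ℝ) (z : ℝ)
    (x : EuclideanSpace ℝ (Fin d)) : EuclideanSpace ℝ (Fin d) →L[ℝ] ℝ :=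
  surrogateWeight z • (fderiv ℝ f (hmap z x)).comp (hmapDeriv z x)

lemma hasFDerivAt_surrogateIntegrand (hf : Differentiable ℝ f) (z : ℝ)
    (x : EuclideanSpace ℝ (Fin d)) :
    HasFDerivAt (fun x => surrogateWeight z * (f (hmap z x) - f 0))
      (surrogateIntegrandFDeriv f z x) x :=
  (((hf _).hasFDerivAt.comp x (hasFDerivAt_hmap z x)).sub_const (f 0)).const_mul _

lemma exists_norm_surrogateIntegrandFDeriv_le (hf : ContDiff ℝ 1 f) (R : ℝ) :
    ∃ B, ∀ z ∈ Ioc (0 : ℝ) 1, ∀ x ∈ Metric.closedBall (0 : EuclideanSpace ℝ (Fin d)) R,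
      ‖surrogateIntegrandFDeriv f z x‖ ≤ B := by
  have hK : IsCompact ((fun p : ℝ × EuclideanSpace ℝ (Fin d) => hmap p.1 p.2) ''
      (Icc 0 1 ×ˢ Metric.closedBall 0 R)) :=
    (isCompact_Icc.prod (isCompact_closedBall 0 R)).image continuous_hmap_uncurry
  obtain ⟨C, hC⟩ := hK.exists_bound_of_continuousOn
    (hf.continuous_fderiv one_ne_zero).continuousOn
  refine ⟨max C 0 * Real.exp R / (1 - Real.exp (-1)), fun z hz x hx => ?_⟩
  have hxR : ‖x‖ ≤ R := by simpa using hx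
  have hfz : ‖fderiv ℝ f (hmap z x)‖ ≤ max C 0 :=
    (hC _ ⟨(z, x), ⟨Ioc_subset_Icc_self hz, hx⟩, rfl⟩).trans (le_max_left _ _)
  have hDz : ‖hmapDeriv z x‖ ≤ z * Real.exp R := by
    refine (norm_hmapDeriv_le hz.1.le x).trans ?_
    have : z * ‖x‖ ≤ R := by nlinarith [hz.1, hz.2, norm_nonneg x]
    gcongr
    exact hz.1.le
  have hexp : Real.exp (z - 1) ≤ 1 := Real.exp_le_one_iff.2 (by linarith [hz.2])
  calc ‖surrogateIntegrandFDeriv f z x‖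
      ≤ surrogateWeight z * (max C 0 * (z * Real.exp R)) := by
        rw [surrogateIntegrandFDeriv, norm_smul, Real.norm_eq_abs,
          abs_of_nonneg (surrogateWeight_nonneg hz.1.le)]
        gcongr
        · exact surrogateWeight_nonneg hz.1.le
        · exact (ContinuousLinearMap.opNorm_comp_le _ _).trans
            (mul_le_mul hfz hDz (norm_nonneg _) (le_max_right _ _))
    _ = Real.exp (z - 1) * (max C 0 * Real.exp R / (1 - Real.exp (-1))) := by
        rw [show surrogateWeight z * (max C 0 * (z * Real.exp R))
            = surrogateWeight z * z * (max C 0 * Real.exp R) by ring,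
          surrogateWeight_mul_self hz.1.ne']
        ring
    _ ≤ max C 0 * Real.exp R / (1 - Real.exp (-1)) := by
        have := one_sub_exp_neg_one_pos
        exact mul_le_of_le_one_left (by positivity) hexp

lemma continuousOn_surrogateIntegrandFDeriv (hf : ContDiff ℝ 1 f)
    (x : EuclideanSpace ℝ (Fin d)) :
    ContinuousOn (fun z => surrogateIntegrandFDeriv f z x) (Ioi 0) :=
  continuousOn_surrogateWeight.smul
    (((hf.continuous_fderiv one_ne_zero).comp (continuous_hmap_left x)).clm_comp
      (continuous_hmapDeriv_left x)).continuousOn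

lemma continuousOn_surrogateIntegrand (hf : Continuous f) (x : EuclideanSpace ℝ (Fin d)) :
    ContinuousOn (fun z => surrogateWeight z * (f (hmap z x) - f 0)) (Ioi 0) :=
  continuousOn_surrogateWeight.mul
    ((hf.comp (continuous_hmap_left x)).sub continuous_const).continuousOn

lemma intervalIntegrable_surrogateIntegrandFDeriv (hf : ContDiff ℝ 1 f)
    (x : EuclideanSpace ℝ (Fin d)) :
    IntervalIntegrable (fun z => surrogateIntegrandFDeriv f z x) volume 0 1 := by
  obtain ⟨B, hB⟩ := exists_norm_surrogateIntegrandFDeriv_le hf ‖x‖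
  exact intervalIntegrable_of_continuousOn_Ioi_of_bound
    (continuousOn_surrogateIntegrandFDeriv hf x) fun z hz => hB z hz x (by simp)

theorem hasFDerivAt_surrogate (hf : ContDiff ℝ 1 f) (x : EuclideanSpace ℝ (Fin d)) :
    HasFDerivAt (surrogate f) (∫ z in (0 : ℝ)..1, surrogateIntegrandFDeriv f z x) x := by
  have hdiff := hf.differentiable one_ne_zero
  obtain ⟨B, hB⟩ := exists_norm_surrogateIntegrandFDeriv_le hf (‖x‖ + 1)
  have hball : Metric.ball x 1 ⊆ Metric.closedBall 0 (‖x‖ + 1) := fun x' hx' => by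
    rw [mem_closedBall_zero_iff]
    have := norm_le_norm_add_norm_sub' x' x
    rw [Metric.mem_ball, dist_eq_norm] at hx'
    linarith
  have hIoc : Ι (0 : ℝ) 1 = Ioc 0 1 := uIoc_of_le zero_le_one
  have hmem : x ∈ Metric.closedBall 0 (‖x‖ + 1) := by simp
  -- the integrand vanishes at `x = 0`, so the mean value inequality bounds it at `x`
  have hint : ∀ z ∈ Ioc (0 : ℝ) 1, ‖surrogateWeight z * (f (hmap z x) - f 0)‖ ≤ B * ‖x‖ :=
    fun z hz => by
      simpa [hmap_zero] using
        (convex_closedBall _ _).norm_image_sub_le_of_norm_hasFDerivWithin_le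
          (fun x' _ => (hasFDerivAt_surrogateIntegrand hdiff z x').hasFDerivWithinAt)
          (hB z hz) (Metric.mem_closedBall_self (by positivity)) hmem
  refine intervalIntegral.hasFDerivAt_integral_of_dominated_of_fderiv_le (bound := fun _ => B)
    (Metric.ball_mem_nhds x one_pos) (.of_forall fun x' => ?_)
    (intervalIntegrable_of_continuousOn_Ioi_of_bound (continuousOn_surrogateIntegrand
      hf.continuous x) hint) ?_ (.of_forall fun z hz x' hx' => hB z (hIoc ▸ hz) x' (hball hx'))
    intervalIntegrable_const (.of_forall fun z _ x' _ => hasFDerivAt_surrogateIntegrand hdiff z x')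
  · rw [hIoc]
    exact ((continuousOn_surrogateIntegrand hf.continuous x').mono
      Ioc_subset_Ioi_self).aestronglyMeasurable measurableSet_Ioc
  · rw [hIoc]
    exact ((continuousOn_surrogateIntegrandFDeriv hf x).mono
      Ioc_subset_Ioi_self).aestronglyMeasurable measurableSet_Ioc

lemma inner_gradient_surrogate (hf : ContDiff ℝ 1 f) (x y : EuclideanSpace ℝ (Fin d)) :
    ⟪gradient (surrogate f) x, y⟫ =
      ∫ z in (0 : ℝ)..1, surrogateIntegrandFDeriv f z x y := by
  rw [gradient, InnerProductSpace.toDual_symm_apply, (hasFDerivAt_surrogate hf x).fderiv,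
    ContinuousLinearMap.intervalIntegral_apply (intervalIntegrable_surrogateIntegrandFDeriv hf x)]

lemma one_sub_exp_neg_one_mul_surrogateIntegrandFDeriv {z : ℝ} (hz : z ≠ 0)
    (x y : EuclideanSpace ℝ (Fin d)) :
    (1 - Real.exp (-1)) * surrogateIntegrandFDeriv f z x y =
      Real.exp (z - 1) * ⟪gradient f (hmap z x), psum (hmap z x) y - hmap z x⟫ := by
  rw [surrogateIntegrandFDeriv, smul_apply, ContinuousLinearMap.comp_apply, hmapDeriv_apply,
    map_smul, psum_hmap_sub_hmap, ← toDual_gradient, InnerProductSpace.toDual_apply_apply,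
    smul_eq_mul, smul_eq_mul, ← mul_assoc (surrogateWeight z), surrogateWeight_mul_self hz]
  field_simp [one_sub_exp_neg_one_pos.ne']

end Surrogate

theorem stmt7_general {d : ℕ} (f : EuclideanSpace ℝ (Fin d) → ℝ)
    (hf : ContDiff ℝ 1 f) (hDR : DRSubmodular f) :
    ∀ x y : EuclideanSpace ℝ (Fin d), inBox x → inBox y →
      (∫ z in (0:ℝ)..1, Real.exp (z - 1) * (f (psum (hmap z x) y) - f (hmap z x))) ≤
        (1 - Real.exp (-1)) * @inner ℝ _ _ (gradient (surrogate f) x) y := by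
  intro x y hx hy
  have hFD := intervalIntegrable_surrogateIntegrandFDeriv hf x
  rw [inner_gradient_surrogate hf, ← intervalIntegral.integral_const_mul]
  refine intervalIntegral.integral_mono_on_of_le_Ioo zero_le_one
    (Continuous.intervalIntegrable ?_ 0 1)
    (IntervalIntegrable.const_mul ⟨hFD.1.apply_continuousLinearMap y,
      hFD.2.apply_continuousLinearMap y⟩ _) fun z hz => ?_
  · have hfc := hf.continuous
    have hh := continuous_hmap_left x
    have hp : Continuous fun z => psum (hmap z x) y :=
      (PiLp.continuous_toLp 2 _).comp (continuous_pi fun i => by fun_prop)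
    fun_prop
  · have hbox := inBox_hmap hx hz.1.le
    rw [one_sub_exp_neg_one_mul_surrogateIntegrandFDeriv hz.1.ne']
    exact mul_le_mul_of_nonneg_left (hDR.sub_le_inner_gradient (hf.differentiable one_ne_zero)
      hbox (inBox_psum hbox hy) (le_psum hbox hy)) (Real.exp_nonneg _)

/-- Gain-term lower bound via probabilistic sums.
For a non-negative, continuously differentiable, `M₁`-Lipschitz, continuous
DR-submodular `f` with surrogate potential `F`, for all `x, y ∈ [0,1]^d`:
`(1-e⁻¹)⟨∇F(x), y⟩ ≥ ∫₀¹ e^{z-1} [f(h_z(x) ⊕ y) - f(h_z(x))] dz`. -/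
theorem stmt7 {d : ℕ} (f : EuclideanSpace ℝ (Fin d) → ℝ) (M₁ : ℝ)
    (hf : ContDiff ℝ 1 f) (hpos : ∀ x, inBox x → 0 ≤ f x)
    (hLip : ∀ x, inBox x → ‖gradient f x‖ ≤ M₁) (hDR : DRSubmodular f) :
    ∀ x y : EuclideanSpace ℝ (Fin d), inBox x → inBox y →
      (∫ z in (0:ℝ)..1, Real.exp (z - 1) * (f (psum (hmap z x) y) - f (hmap z x))) ≤
        (1 - Real.exp (-1)) * @inner ℝ _ _ (gradient (surrogate f) x) y :=
  stmt7_general f hf hDR
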